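/- arXiv:1705.02205 — 2 statements merged into one kernel-verified Lean document; each statement's English description precedes it below -/
import Mathlib

section
/- For all real numbers w_R < w_F, the double integral ∫_{-∞}^{w_F} e^{-z²/2} (∫_{max(z,w_R)}^{w_F} e^{u²/2} du) dz is finite and equals the (finite) single integral ∫_0^∞ (e^{-s²/2}/s)(e^{s·w_F} − e^{s·w_R}) ds. -/
/-!
Both sides equal `∫_{w_R}^{w_F} e^{u²/2} ∫_{-∞}^u e^{-z²/2} dz du`. For the left side this is
Fubini on the region `z < u`. For the right side, write
`(e^{s w_F} - e^{s w_R}) / s = ∫_{w_R}^{w_F} e^{s u} du`, swap the integrals, and complete the square: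
`∫_0^∞ e^{-s²/2 + s u} ds = e^{u²/2} ∫_{-∞}^u e^{-z²/2} dz`.
-/

open MeasureTheory Set Real

theorem integrable_exp_neg_sq_div_two : Integrable fun z : ℝ => exp (-z ^ 2 / 2) := by
  simpa only [div_eq_inv_mul, mul_neg, neg_mul] using
    integrable_exp_neg_mul_sq (by norm_num : (0 : ℝ) < 2⁻¹)

theorem exp_neg_sq_div_two_add_mul (s u : ℝ) :
    exp (-s ^ 2 / 2 + s * u) = exp (u ^ 2 / 2) * exp (-(u - s) ^ 2 / 2) := by
  rw [← exp_add]; ring_nf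

theorem setIntegral_Ioi_zero_comp_const_sub {E : Type*} [NormedAddCommGroup E] [NormedSpace ℝ E]
    (g : ℝ → E) (u : ℝ) : ∫ s in Ioi 0, g (u - s) = ∫ t in Iio u, g t := by
  rw [← sub_zero u, ← image_const_sub_Ioi, sub_zero,
    (volume.measurePreserving_sub_left u).setIntegral_image_emb
      (Homeomorph.subLeft u).measurableEmbedding]

theorem integral_Ioi_exp_neg_sq_div_two_add_mul (u : ℝ) :
    ∫ s in Ioi 0, exp (-s ^ 2 / 2 + s * u) = exp (u ^ 2 / 2) * ∫ z in Iio u, exp (-z ^ 2 / 2) := by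
  simp_rw [exp_neg_sq_div_two_add_mul, integral_const_mul]
  rw [setIntegral_Ioi_zero_comp_const_sub (fun t => exp (-t ^ 2 / 2)) u]

theorem integral_Ioc_exp_mul {s : ℝ} (hs : s ≠ 0) {a b : ℝ} (hab : a ≤ b) :
    ∫ u in Ioc a b, exp (s * u) = (exp (s * b) - exp (s * a)) / s := by
  rw [← intervalIntegral.integral_of_le hab, intervalIntegral.integral_comp_mul_left exp hs,
    integral_exp, smul_eq_mul, inv_mul_eq_div]

theorem integrableOn_mul_setIntegral_Ioc_max_and_integral_eq {f g : ℝ → ℝ} {a b : ℝ}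
    (hf : IntegrableOn f (Iic b)) (hg : IntegrableOn g (Ioc a b)) :
    IntegrableOn (fun z => f z * ∫ u in Ioc (max z a) b, g u) (Iic b) ∧
      ∫ z in Iic b, f z * ∫ u in Ioc (max z a) b, g u =
        ∫ u in Ioc a b, (∫ z in Iio u, f z) * g u := by
  set F : ℝ × ℝ → ℝ := {p | p.1 < p.2}.indicator fun p => f p.1 * g p.2
  have hF : Integrable F ((volume.restrict (Iic b)).prod (volume.restrict (Ioc a b))) :=
    (hf.mul_prod hg).indicator (measurableSet_lt measurable_fst measurable_snd)
  have inner_z (z : ℝ) : f z * ∫ u in Ioc (max z a) b, g u = ∫ u in Ioc a b, F (z, u) := by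
    have slice : ∀ u, F (z, u) = (Ioi z).indicator (fun u => f z * g u) u := fun u => by
      by_cases hzu : z < u <;> simp [F, indicator, hzu]
    simp_rw [slice]
    rw [setIntegral_indicator measurableSet_Ioi, integral_const_mul, Ioc_inter_Ioi, max_comm]
  have inner_u : ∀ u ∈ Ioc a b, ∫ z in Iic b, F (z, u) = (∫ z in Iio u, f z) * g u := by
    intro u hu
    have slice : ∀ z, F (z, u) = (Iio u).indicator (fun z => f z * g u) z := fun z => by
      by_cases hzu : z < u <;> simp [F, indicator, hzu]
    simp_rw [slice]
    rw [setIntegral_indicator measurableSet_Iio, integral_mul_const,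
      inter_eq_self_of_subset_right (Iio_subset_Iic_iff.mpr hu.2)]
  refine ⟨hF.integral_prod_left.congr (ae_of_all _ fun z => (inner_z z).symm), ?_⟩
  calc ∫ z in Iic b, f z * ∫ u in Ioc (max z a) b, g u
      = ∫ z in Iic b, ∫ u in Ioc a b, F (z, u) := by simp_rw [inner_z]
    _ = ∫ u in Ioc a b, ∫ z in Iic b, F (z, u) := integral_integral_swap hF
    _ = ∫ u in Ioc a b, (∫ z in Iio u, f z) * g u :=
        setIntegral_congr_fun measurableSet_Ioc inner_u

theorem integrable_exp_neg_sq_div_two_add_mul_prod (a b : ℝ) :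
    Integrable (fun p : ℝ × ℝ => exp (-p.1 ^ 2 / 2 + p.1 * p.2))
      ((volume.restrict (Ioi 0)).prod (volume.restrict (Ioc a b))) := by
  have dom : Integrable (fun s => exp (-s ^ 2 / 2 + s * b)) (volume.restrict (Ioi 0)) := by
    simp_rw [exp_neg_sq_div_two_add_mul]
    exact ((integrable_exp_neg_sq_div_two.comp_sub_left b).const_mul _).integrableOn
  refine (dom.comp_fst _).mono (by fun_prop) ?_
  rw [Measure.prod_restrict]
  filter_upwards [ae_restrict_mem (measurableSet_Ioi.prod measurableSet_Ioc)] with p hp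
  simp only [norm_eq_abs, abs_exp, exp_le_exp]
  nlinarith [hp.1.out, hp.2.2]

theorem integrableOn_exp_neg_sq_div_two_div_mul_sub_and_integral_eq {a b : ℝ} (hab : a ≤ b) :
    IntegrableOn (fun s => exp (-s ^ 2 / 2) / s * (exp (s * b) - exp (s * a))) (Ioi 0) ∧
      ∫ s in Ioi 0, exp (-s ^ 2 / 2) / s * (exp (s * b) - exp (s * a)) =
        ∫ u in Ioc a b, (∫ z in Iio u, exp (-z ^ 2 / 2)) * exp (u ^ 2 / 2) := by
  have hF := integrable_exp_neg_sq_div_two_add_mul_prod a b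
  have inner_u : ∀ s ∈ Ioi (0 : ℝ), exp (-s ^ 2 / 2) / s * (exp (s * b) - exp (s * a)) =
      ∫ u in Ioc a b, exp (-s ^ 2 / 2 + s * u) := fun s hs => by
    simp_rw [exp_add, integral_const_mul, integral_Ioc_exp_mul hs.out.ne' hab]
    ring
  refine ⟨hF.integral_prod_left.congr ?_, ?_⟩
  · filter_upwards [ae_restrict_mem measurableSet_Ioi] with s hs using (inner_u s hs).symm
  calc ∫ s in Ioi 0, exp (-s ^ 2 / 2) / s * (exp (s * b) - exp (s * a))
      = ∫ s in Ioi 0, ∫ u in Ioc a b, exp (-s ^ 2 / 2 + s * u) :=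
        setIntegral_congr_fun measurableSet_Ioi inner_u
    _ = ∫ u in Ioc a b, ∫ s in Ioi 0, exp (-s ^ 2 / 2 + s * u) := integral_integral_swap hF
    _ = ∫ u in Ioc a b, (∫ z in Iio u, exp (-z ^ 2 / 2)) * exp (u ^ 2 / 2) := by
        simp_rw [integral_Ioi_exp_neg_sq_div_two_add_mul, mul_comm]

theorem double_integral_eq_single_integral (wR wF : ℝ) (h : wR < wF) :
    MeasureTheory.IntegrableOn
      (fun z => Real.exp (-z ^ 2 / 2) * ∫ u in Set.Ioc (max z wR) wF, Real.exp (u ^ 2 / 2))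
      (Set.Iic wF) ∧
    MeasureTheory.IntegrableOn
      (fun s => Real.exp (-s ^ 2 / 2) / s * (Real.exp (s * wF) - Real.exp (s * wR)))
      (Set.Ioi (0 : ℝ)) ∧
    (∫ z in Set.Iic wF,
        Real.exp (-z ^ 2 / 2) * ∫ u in Set.Ioc (max z wR) wF, Real.exp (u ^ 2 / 2)) =
      ∫ s in Set.Ioi (0 : ℝ),
        Real.exp (-s ^ 2 / 2) / s * (Real.exp (s * wF) - Real.exp (s * wR)) := by
  have hg : Continuous fun u : ℝ => exp (u ^ 2 / 2) := by fun_prop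
  obtain ⟨hL, hL_eq⟩ := integrableOn_mul_setIntegral_Ioc_max_and_integral_eq
    integrable_exp_neg_sq_div_two.integrableOn hg.integrableOn_Ioc
  obtain ⟨hR, hR_eq⟩ := integrableOn_exp_neg_sq_div_two_div_mul_sub_and_integral_eq h.le
  exact ⟨hL, hR, hL_eq.trans hR_eq.symm⟩
end

section
/- The function ρ is continuous and nonnegative on (-∞,V_F], strictly positive on (-∞,V_F), and satisfies ρ(V_F)=0; it is differentiable on (-∞,V_R) and on (V_R,V_F) with a·ρ'(v) = (V_0−v)·ρ(v) for v < V_R and a·ρ'(v) = (V_0−v)·ρ(v) − N for V_R < v < V_F; and its left derivative at V_F satisfies N = −a·ρ'(V_F). In other words, ρ is a stationary profile: the flux (V_0−v)ρ(v) − a ρ'(v) equals 0 on (-∞,V_R) and equals N on (V_R,V_F), with absorbing boundary condition at V_F and firing rate N. -/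
/-!
Write ρ(v) = c e^{-φ(v)} ∫_{max(v,V_R)}^{V_F} e^{φ} with the potential φ(v) = (v - V₀)²/(2a)
and c = N/a; only φ' = (v - V₀)/a is specific to this potential. Left of V_R the integral is
constant, so ρ is a multiple of e^{-φ} and ρ' = -φ' ρ. Right of V_R the fundamental theorem of
calculus differentiates the integral to -e^{φ(v)}, which cancels against e^{-φ(v)} and leaves the
constant flux term -c. At V_F the integral vanishes, so the one-sided derivative there is -c.
-/

/-- The stationary profile
ρ(v) := (N/a) e^{-(v−V_0)²/(2a)} ∫_{max(v,V_R)}^{V_F} e^{(w−V_0)²/(2a)} dw. -/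
noncomputable def statProfile (N a V0 VR VF : ℝ) (v : ℝ) : ℝ :=
  N / a * Real.exp (-(v - V0) ^ 2 / (2 * a)) *
    ∫ w in (max v VR)..VF, Real.exp ((w - V0) ^ 2 / (2 * a))

open Real intervalIntegral Set Filter

noncomputable def stationaryProfile (φ : ℝ → ℝ) (c VR VF v : ℝ) : ℝ :=
  c * exp (-φ v) * ∫ w in max v VR..VF, exp (φ w)

section StationaryProfile

variable {φ : ℝ → ℝ} {c VR VF v d : ℝ}

lemma hasDerivAt_integral_exp_left (hφ : Continuous φ) (VF t : ℝ) :
    HasDerivAt (fun t => ∫ w in t..VF, exp (φ w)) (-exp (φ t)) t :=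
  have hexp : Continuous fun w => exp (φ w) := continuous_exp.comp hφ
  integral_hasDerivAt_left (hexp.intervalIntegrable _ _) (hexp.stronglyMeasurableAtFilter _ _)
    hexp.continuousAt

lemma stationaryProfile_of_le (hv : v ≤ VR) :
    stationaryProfile φ c VR VF v = (c * ∫ w in VR..VF, exp (φ w)) * exp (-φ v) := by
  rw [stationaryProfile, max_eq_right hv]
  ring

lemma stationaryProfile_of_ge (hv : VR ≤ v) :
    stationaryProfile φ c VR VF v = c * exp (-φ v) * ∫ w in v..VF, exp (φ w) := by
  rw [stationaryProfile, max_eq_left hv]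

lemma continuous_stationaryProfile (hφ : Continuous φ) :
    Continuous (stationaryProfile φ c VR VF) := by
  have htail : Continuous fun t => ∫ w in t..VF, exp (φ w) :=
    continuous_iff_continuousAt.2 fun t => (hasDerivAt_integral_exp_left hφ VF t).continuousAt
  unfold stationaryProfile
  exact (continuous_const.mul (continuous_exp.comp hφ.neg)).mul
    (htail.comp (continuous_id.max continuous_const))

lemma stationaryProfile_nonneg (hc : 0 ≤ c) (hR : VR ≤ VF) (hv : v ≤ VF) :
    0 ≤ stationaryProfile φ c VR VF v :=
  mul_nonneg (mul_nonneg hc (exp_nonneg _))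
    (integral_nonneg (max_le hv hR) fun _ _ => exp_nonneg _)

lemma stationaryProfile_pos (hφ : Continuous φ) (hc : 0 < c) (hR : VR < VF) (hv : v < VF) :
    0 < stationaryProfile φ c VR VF v :=
  mul_pos (mul_pos hc (exp_pos _))
    (intervalIntegral_pos_of_pos_on ((continuous_exp.comp hφ).intervalIntegrable _ _)
      (fun _ _ => exp_pos _) (max_lt hv hR))

lemma stationaryProfile_right_endpoint (hR : VR ≤ VF) : stationaryProfile φ c VR VF VF = 0 := by
  rw [stationaryProfile_of_ge hR, integral_same, mul_zero]

lemma hasDerivAt_stationaryProfile_of_lt (hφv : HasDerivAt φ d v) (hv : v < VR) :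
    HasDerivAt (stationaryProfile φ c VR VF) (-d * stationaryProfile φ c VR VF v) v := by
  have hloc : stationaryProfile φ c VR VF =ᶠ[nhds v]
      fun u => (c * ∫ w in VR..VF, exp (φ w)) * exp (-φ u) := by
    filter_upwards [Iio_mem_nhds hv] with u hu
    exact stationaryProfile_of_le hu.le
  refine ((hφv.neg.exp.const_mul _).congr_of_eventuallyEq hloc).congr_deriv ?_
  rw [stationaryProfile_of_le hv.le, Pi.neg_apply]
  ring

lemma hasDerivAt_stationaryProfile_of_gt (hφ : Continuous φ) (hφv : HasDerivAt φ d v)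
    (hv : VR < v) :
    HasDerivAt (stationaryProfile φ c VR VF) (-d * stationaryProfile φ c VR VF v - c) v := by
  have hloc : stationaryProfile φ c VR VF =ᶠ[nhds v]
      fun u => c * exp (-φ u) * ∫ w in u..VF, exp (φ w) := by
    filter_upwards [Ioi_mem_nhds hv] with u hu
    exact stationaryProfile_of_ge hu.le
  have hcancel : exp (-φ v) * exp (φ v) = 1 := by rw [← exp_add, neg_add_cancel, exp_zero]
  have hprod := (hφv.neg.exp.const_mul c).mul (hasDerivAt_integral_exp_left hφ VF v)
  refine (hprod.congr_of_eventuallyEq hloc).congr_deriv ?_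
  rw [stationaryProfile_of_ge hv.le]
  linear_combination (-c) * hcancel

end StationaryProfile

lemma statProfile_eq_stationaryProfile (N a V0 VR VF : ℝ) :
    statProfile N a V0 VR VF =
      stationaryProfile (fun v => (v - V0) ^ 2 / (2 * a)) (N / a) VR VF := by
  ext v
  simp only [statProfile, stationaryProfile, neg_div]

lemma hasDerivAt_sq_sub_div (a V0 v : ℝ) :
    HasDerivAt (fun v => (v - V0) ^ 2 / (2 * a)) ((v - V0) / a) v := by
  refine ((((hasDerivAt_id' v).sub_const V0).pow 2).div_const (2 * a)).congr_deriv ?_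
  ring

theorem statProfile_properties (VR VF N a V0 : ℝ) (hV : VR < VF) (hN : 0 < N) (ha : 0 < a) :
    ContinuousOn (statProfile N a V0 VR VF) (Set.Iic VF) ∧
    (∀ v ∈ Set.Iic VF, 0 ≤ statProfile N a V0 VR VF v) ∧
    (∀ v ∈ Set.Iio VF, 0 < statProfile N a V0 VR VF v) ∧
    statProfile N a V0 VR VF VF = 0 ∧
    (∀ v ∈ Set.Iio VR,
      HasDerivAt (statProfile N a V0 VR VF) ((V0 - v) * statProfile N a V0 VR VF v / a) v) ∧
    (∀ v ∈ Set.Ioo VR VF,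
      HasDerivAt (statProfile N a V0 VR VF)
        (((V0 - v) * statProfile N a V0 VR VF v - N) / a) v) ∧
    HasDerivWithinAt (statProfile N a V0 VR VF) (-(N / a)) (Set.Iic VF) VF := by
  have hφ : Continuous fun v : ℝ => (v - V0) ^ 2 / (2 * a) := by fun_prop
  have hc : 0 < N / a := div_pos hN ha
  have hzero := stationaryProfile_right_endpoint (φ := fun v => (v - V0) ^ 2 / (2 * a))
    (c := N / a) hV.le
  rw [statProfile_eq_stationaryProfile]
  refine ⟨(continuous_stationaryProfile hφ).continuousOn,
    fun v hv => stationaryProfile_nonneg hc.le hV.le hv,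
    fun v hv => stationaryProfile_pos hφ hc hV hv, hzero, fun v hv => ?_, fun v hv => ?_, ?_⟩
  · convert hasDerivAt_stationaryProfile_of_lt (hasDerivAt_sq_sub_div a V0 v) hv using 1
    ring
  · convert hasDerivAt_stationaryProfile_of_gt hφ (hasDerivAt_sq_sub_div a V0 v) hv.1 using 1
    ring
  · have hVF := hasDerivAt_stationaryProfile_of_gt (c := N / a) (VF := VF) hφ
      (hasDerivAt_sq_sub_div a V0 VF) hV
    rw [hzero, mul_zero, zero_sub] at hVF
    exact hVF.hasDerivWithinAt
end
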